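/- Let N ≥ 2, let u : S^{N−1} → (0,∞) be continuous, nonconstant, and separable in S^{N−1}, and let M ∈ O(N) and h₁ > h₂ in [−1,1] be such that, with u_M(x) = u(M⁻¹x): {x ∈ S^{N−1} : u_M(x) = max u} = {x ∈ S^{N−1} : x_N ≥ h₁}, {x ∈ S^{N−1} : u_M(x) = min u} = {x ∈ S^{N−1} : x_N ≤ h₂}, u_M is constant on each latitude {x ∈ S^{N−1} : x_N = h}, and α ↦ u_M(0,…,0, cos α, sin α) is nonincreasing on [π/2, 3π/2]. Then for every open half-space H ⊂ ℝ^N with 0 ∈ ∂H: (i) if M⁻¹(0,…,0,1) ∈ H, then u(x) ≥ u(σ_H x) for all x ∈ H ∩ S^{N−1}; (ii) if M⁻¹(0,…,0,1) ∉ cl(H), then u(x) ≤ u(σ_H x) for all x ∈ H ∩ S^{N−1}. -/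

import Mathlib

open scoped RealInnerProductSpace

/-- The point `(0,…,0, cos α, sin α)` of `ℝ^N`. -/
noncomputable def circlePoint (N : ℕ) (α : ℝ) : EuclideanSpace ℝ (Fin N) :=
  (EuclideanSpace.equiv (Fin N) ℝ).symm fun i =>
    if (i : ℕ) = N - 2 then Real.cos α else if (i : ℕ) = N - 1 then Real.sin α else 0

/-- The reflection of `ℝ^N` across the hyperplane `{x : ⟪a,x⟫ = 0}` through the
origin, bounding the open half-space `H = {x : ⟪a,x⟫ > 0}`. -/
noncomputable def reflectHyp0 {E : Type*} [NormedAddCommGroup E] [InnerProductSpace ℝ E]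
    (a : E) (x : E) : E :=
  x - ((2 * ⟪a, x⟫) / ⟪a, a⟫) • a

/-!
Let `e = M⁻¹ e_N`, so that `⟪e, x⟫ = (M x)_N` is the height of `M x`. Since `u ∘ M⁻¹` is
constant on latitudes and nondecreasing along the meridian `α ↦ (0,…,0, cos α, sin α)` as
the height `sin α` grows, `u` is a nondecreasing function of `⟪e, x⟫` on the sphere. The
reflection `σ_H` preserves the sphere and moves the height of `x ∈ H` by
`-2 ⟪a, x⟫ ⟪a, e⟫ / ‖a‖²`, whose sign is the opposite of that of `⟪a, e⟫`.
-/

section reflectHyp0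

variable {E : Type*} [NormedAddCommGroup E] [InnerProductSpace ℝ E]

lemma norm_reflectHyp0 (a x : E) : ‖reflectHyp0 a x‖ = ‖x‖ := by
  rcases eq_or_ne a 0 with rfl | ha
  · simp [reflectHyp0]
  have ha2 : ‖a‖ ^ 2 ≠ 0 := by positivity
  refine (sq_eq_sq₀ (norm_nonneg _) (norm_nonneg _)).1 ?_
  rw [reflectHyp0, norm_sub_sq_real, real_inner_smul_right, norm_smul, mul_pow,
    Real.norm_eq_abs, sq_abs, real_inner_self_eq_norm_sq, real_inner_comm x a]
  field_simp
  ring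

lemma inner_reflectHyp0 (a p x : E) :
    ⟪p, reflectHyp0 a x⟫ = ⟪p, x⟫ - 2 * ⟪a, x⟫ / ⟪a, a⟫ * ⟪a, p⟫ := by
  rw [reflectHyp0, inner_sub_right, real_inner_smul_right, real_inner_comm a p]

lemma inner_reflectHyp0_le {a p x : E} (hx : 0 ≤ ⟪a, x⟫) (hp : 0 ≤ ⟪a, p⟫) :
    ⟪p, reflectHyp0 a x⟫ ≤ ⟪p, x⟫ := by
  rw [inner_reflectHyp0, sub_le_self_iff]
  have := real_inner_self_nonneg (x := a)
  positivity

lemma reflectHyp0_mem_sphere (a : E) {x : E} {r : ℝ} (hx : x ∈ Metric.sphere 0 r) :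
    reflectHyp0 a x ∈ Metric.sphere 0 r := by
  simpa [mem_sphere_zero_iff_norm, norm_reflectHyp0] using hx

lemma le_inner_reflectHyp0 {a p x : E} (hx : 0 ≤ ⟪a, x⟫) (hp : ⟪a, p⟫ ≤ 0) :
    ⟪p, x⟫ ≤ ⟪p, reflectHyp0 a x⟫ := by
  rw [inner_reflectHyp0, le_sub_self_iff]
  exact mul_nonpos_of_nonneg_of_nonpos (div_nonneg (by positivity) real_inner_self_nonneg) hp

end reflectHyp0

lemma EuclideanSpace.apply_mem_Icc_of_mem_sphere {ι : Type*} [Fintype ι]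
    {x : EuclideanSpace ℝ ι} (hx : x ∈ Metric.sphere 0 1) (i : ι) :
    x i ∈ Set.Icc (-1) 1 := by
  rw [Set.mem_Icc, ← abs_le]
  simpa [mem_sphere_zero_iff_norm.1 hx] using PiLp.norm_apply_le x i

section circlePoint

variable {N : ℕ}

lemma circlePoint_apply_of_eq_last (hN : 2 ≤ N) (α : ℝ) {i : Fin N} (hi : (i : ℕ) = N - 1) :
    circlePoint N α i = Real.sin α := by
  simp [circlePoint, hi, show N - 1 ≠ N - 2 by omega]

lemma circlePoint_mem_sphere (hN : 2 ≤ N) (α : ℝ) :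
    circlePoint N α ∈ Metric.sphere (0 : EuclideanSpace ℝ (Fin N)) 1 := by
  rw [mem_sphere_zero_iff_norm, EuclideanSpace.norm_eq, Real.sqrt_eq_one,
    Fintype.sum_eq_add (⟨N - 2, by omega⟩ : Fin N) ⟨N - 1, by omega⟩]
  · simp [circlePoint, show N - 1 ≠ N - 2 by omega, Real.cos_sq_add_sin_sq]
  · simp [Fin.ext_iff]; omega
  · rintro j ⟨hj₁, hj₂⟩
    simp [circlePoint, Fin.val_ne_of_ne hj₁, Fin.val_ne_of_ne hj₂]

lemma le_of_apply_le_of_antitoneOn_circlePoint (hN : 2 ≤ N)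
    {v : EuclideanSpace ℝ (Fin N) → ℝ} {i : Fin N} (hi : (i : ℕ) = N - 1)
    (hlat : ∀ x ∈ Metric.sphere (0 : EuclideanSpace ℝ (Fin N)) 1,
      ∀ y ∈ Metric.sphere (0 : EuclideanSpace ℝ (Fin N)) 1, x i = y i → v x = v y)
    (hmono : AntitoneOn (fun α => v (circlePoint N α)) (Set.Icc (Real.pi / 2) (3 * Real.pi / 2)))
    {x y : EuclideanSpace ℝ (Fin N)} (hx : x ∈ Metric.sphere 0 1) (hy : y ∈ Metric.sphere 0 1)
    (hxy : x i ≤ y i) : v x ≤ v y := by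
  -- `π - arcsin t` is the angle in `[π/2, 3π/2]` at which the circle reaches height `t`
  have hlift : ∀ z ∈ Metric.sphere (0 : EuclideanSpace ℝ (Fin N)) 1,
      v z = v (circlePoint N (Real.pi - Real.arcsin (z i))) := by
    intro z hz
    obtain ⟨hzi₁, hzi₂⟩ := EuclideanSpace.apply_mem_Icc_of_mem_sphere hz i
    refine hlat z hz _ (circlePoint_mem_sphere hN _) ?_
    rw [circlePoint_apply_of_eq_last hN _ hi, Real.sin_pi_sub,
      Real.sin_arcsin hzi₁ hzi₂]
  have hangle : ∀ t : ℝ, Real.pi - Real.arcsin t ∈ Set.Icc (Real.pi / 2) (3 * Real.pi / 2) :=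
    fun t => ⟨by linarith [Real.arcsin_le_pi_div_two t],
      by linarith [Real.neg_pi_div_two_le_arcsin t]⟩
  rw [hlift x hx, hlift y hy]
  exact hmono (hangle _) (hangle _) (by linarith [Real.arcsin_le_arcsin hxy])

end circlePoint

theorem stmt_8 (N : ℕ) (hN : 2 ≤ N)
    (u : EuclideanSpace ℝ (Fin N) → ℝ)
    (M : EuclideanSpace ℝ (Fin N) ≃ₗᵢ[ℝ] EuclideanSpace ℝ (Fin N))
    (hlat : ∀ h ∈ Set.Icc (-1 : ℝ) 1,
        ∀ x ∈ Metric.sphere (0 : EuclideanSpace ℝ (Fin N)) 1,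
        ∀ y ∈ Metric.sphere (0 : EuclideanSpace ℝ (Fin N)) 1,
          x ⟨N - 1, by omega⟩ = h → y ⟨N - 1, by omega⟩ = h →
          u (M.symm x) = u (M.symm y))
    (hmono : AntitoneOn (fun α => u (M.symm (circlePoint N α)))
        (Set.Icc (Real.pi / 2) (3 * Real.pi / 2))) :
    ∀ a : EuclideanSpace ℝ (Fin N), a ≠ 0 →
      (0 < ⟪a, M.symm (EuclideanSpace.single (⟨N - 1, by omega⟩ : Fin N) (1 : ℝ))⟫ →
        ∀ x ∈ Metric.sphere (0 : EuclideanSpace ℝ (Fin N)) 1,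
          0 < ⟪a, x⟫ → u (reflectHyp0 a x) ≤ u x) ∧
      (⟪a, M.symm (EuclideanSpace.single (⟨N - 1, by omega⟩ : Fin N) (1 : ℝ))⟫ < 0 →
        ∀ x ∈ Metric.sphere (0 : EuclideanSpace ℝ (Fin N)) 1,
          0 < ⟪a, x⟫ → u x ≤ u (reflectHyp0 a x)) := by
  set last : Fin N := ⟨N - 1, by omega⟩
  set e := M.symm (EuclideanSpace.single last (1 : ℝ))
  have hsphere : ∀ {x : EuclideanSpace ℝ (Fin N)}, x ∈ Metric.sphere 0 1 →
      M x ∈ Metric.sphere 0 1 := fun hx => by simpa using hx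
  have hheight : ∀ x, ⟪e, x⟫ = M x last := fun x => by
    rw [← M.inner_map_map, M.apply_symm_apply, EuclideanSpace.inner_single_left, map_one, one_mul]
  have hlat' : ∀ x ∈ Metric.sphere (0 : EuclideanSpace ℝ (Fin N)) 1,
      ∀ y ∈ Metric.sphere (0 : EuclideanSpace ℝ (Fin N)) 1, x last = y last →
        u (M.symm x) = u (M.symm y) := fun x hx y hy h =>
    hlat _ (EuclideanSpace.apply_mem_Icc_of_mem_sphere hx last) x hx y hy rfl h.symm
  have hu : ∀ x ∈ Metric.sphere (0 : EuclideanSpace ℝ (Fin N)) 1,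
      ∀ y ∈ Metric.sphere (0 : EuclideanSpace ℝ (Fin N)) 1,
        ⟪e, x⟫ ≤ ⟪e, y⟫ → u x ≤ u y := by
    intro x hx y hy hxy
    rw [hheight, hheight] at hxy
    simpa using le_of_apply_le_of_antitoneOn_circlePoint hN (v := u ∘ M.symm) rfl hlat' hmono
      (hsphere hx) (hsphere hy) hxy
  intro a _
  exact ⟨fun hae x hx hax =>
      hu _ (reflectHyp0_mem_sphere a hx) x hx (inner_reflectHyp0_le hax.le hae.le),
    fun hae x hx hax =>
      hu x hx _ (reflectHyp0_mem_sphere a hx) (le_inner_reflectHyp0 hax.le hae.le)⟩
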